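/- arXiv:math/0610257 — 5 statements merged into one kernel-verified Lean document; each statement's English description precedes it below -/
import Mathlib

section
/- Any billiard trajectory in the polyhedral cone Q experiences at most (4/(d·δ))^(n−1) reflections, where d is the inradius constant and δ the capacity constant of the cone; that is, if p₁,…,p_N, v₀,…,v_N, i₁,…,i_N form a billiard trajectory in Q with N reflections, then N ≤ (4/(d·δ))^(n−1). -/
open RealInnerProductSpace

lemma cap_univ {n : ℕ} [NeZero n] (α : Fin n → EuclideanSpace ℝ (Fin n))
    (δ : ℝ) (hδ0 : 0 ≤ δ)
    (hlb : ∀ y : EuclideanSpace ℝ (Fin n), ‖y‖ = 1 →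
      δ ≤ Finset.univ.sup' Finset.univ_nonempty fun i => |⟪y, α i⟫|)
    (u : EuclideanSpace ℝ (Fin n)) :
    δ * ‖u‖ ≤ Finset.univ.sup' Finset.univ_nonempty fun i => |⟪u, α i⟫| := by
  rcases eq_or_ne u 0 with rfl | hu
  · simp only [norm_zero, mul_zero]
    exact le_trans (abs_nonneg _)
      (Finset.le_sup' (fun i => |⟪(0:EuclideanSpace ℝ (Fin n)), α i⟫|) (Finset.mem_univ (Classical.arbitrary (Fin n))))
  · have hnu : (0:ℝ) < ‖u‖ := norm_pos_iff.mpr hu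
    set y := ‖u‖⁻¹ • u with hy
    have hy1 : ‖y‖ = 1 := by
      rw [hy, norm_smul, norm_inv, norm_norm, inv_mul_cancel₀ hnu.ne']
    have h1 := hlb y hy1
    obtain ⟨i₀, _, hi₀⟩ := Finset.exists_mem_eq_sup' Finset.univ_nonempty
      (fun i => |⟪y, α i⟫|)
    rw [hi₀] at h1
    have h2 : |⟪y, α i₀⟫| = ‖u‖⁻¹ * |⟪u, α i₀⟫| := by
      rw [hy, real_inner_smul_left, abs_mul, abs_inv, abs_norm]
    rw [h2] at h1
    have h3 : δ * ‖u‖ ≤ |⟪u, α i₀⟫| := by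
      rw [mul_comm]
      rw [inv_mul_eq_div, le_div_iff₀ hnu] at h1
      linarith [h1]
    exact le_trans h3 (Finset.le_sup' (fun i => |⟪u, α i⟫|) (Finset.mem_univ i₀))

lemma cap_ext {n : ℕ} [NeZero n] (α : Fin n → EuclideanSpace ℝ (Fin n))
    (hα : LinearIndependent ℝ α)
    (δ : ℝ) (hδ0 : 0 ≤ δ)
    (hlb : ∀ y : EuclideanSpace ℝ (Fin n), ‖y‖ = 1 →
      δ ≤ Finset.univ.sup' Finset.univ_nonempty fun i => |⟪y, α i⟫|)
    (T : Finset (Fin n)) (hT : T.Nonempty)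
    (u : EuclideanSpace ℝ (Fin n)) (hu : u ∈ Submodule.span ℝ (α '' ↑T)) :
    δ * ‖u‖ ≤ T.sup' hT fun i => |⟪u, α i⟫| := by
  suffices H : ∀ m : ℕ, ∀ T : Finset (Fin n), n - T.card ≤ m → ∀ (hT : T.Nonempty),
      ∀ u ∈ Submodule.span ℝ (α '' ↑T), δ * ‖u‖ ≤ T.sup' hT fun i => |⟪u, α i⟫| by
    exact H n T (Nat.sub_le _ _) hT u hu
  intro m
  induction m with
  | zero =>
    intro T hcard hT u hu
    have hTuniv : T = Finset.univ := by
      apply Finset.eq_univ_of_card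
      have := Finset.card_le_univ T
      simp only [Finset.card_univ, Fintype.card_fin] at *
      omega
    subst hTuniv
    have := cap_univ α δ hδ0 hlb u
    exact le_trans this (le_of_eq (Finset.sup'_congr _ rfl (fun _ _ => rfl)))
  | succ m IH =>
    intro T hcard hT u hu
    by_cases hTuniv : T = Finset.univ
    · subst hTuniv
      have := cap_univ α δ hδ0 hlb u
      exact le_trans this (le_of_eq (Finset.sup'_congr _ rfl (fun _ _ => rfl)))
    · -- pick j ∉ T
      have hex : ∃ j, j ∉ T := by
        by_contra h
        push_neg at h
        exact hTuniv (Finset.eq_univ_iff_forall.mpr h)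
      obtain ⟨j, hj⟩ := hex
      set K := Submodule.span ℝ (α '' ↑T) with hK
      set Pαj : EuclideanSpace ℝ (Fin n) := ↑(Submodule.orthogonalProjection K (α j)) with hPαj
      set q : EuclideanSpace ℝ (Fin n) := α j - Pαj with hq
      have hqmem : q ∈ Kᗮ := Submodule.sub_starProjection_mem_orthogonal (α j)
      have hPmem : Pαj ∈ K := (Submodule.orthogonalProjection K (α j)).2
      have hαjT : ∀ i ∈ T, α i ∈ K := fun i hi =>
        Submodule.subset_span ⟨i, by simpa using hi, rfl⟩
      have hq0 : q ≠ 0 := by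
        intro h
        have : α j ∈ K := by
          have : α j = Pαj := by rwa [hq, sub_eq_zero] at h
          rw [this]; exact hPmem
        exact hα.notMem_span_image (by simpa using hj) this
      set A : ℝ := ⟪u, α j⟫ with hA
      set B : ℝ := ‖q‖^2 with hB
      have hBpos : 0 < B := by
        rw [hB]
        exact pow_pos (norm_pos_iff.mpr hq0) 2
      have hqu : ⟪u, q⟫ = 0 := Submodule.inner_right_of_mem_orthogonal hu hqmem
      have hqαj : ⟪q, α j⟫ = B := by
        have h1 : ⟪q, Pαj⟫ = 0 := by
          rw [real_inner_comm]
          exact Submodule.inner_right_of_mem_orthogonal hPmem hqmem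
        have : ⟪q, α j⟫ = ⟪q, q⟫ + ⟪q, Pαj⟫ := by
          rw [← inner_add_right]
          congr 1
          rw [hq]; abel
        rw [this, h1, real_inner_self_eq_norm_sq, add_zero]
      have hqαi : ∀ i ∈ T, ⟪q, α i⟫ = 0 := fun i hi => by
        rw [real_inner_comm]
        exact Submodule.inner_right_of_mem_orthogonal (hαjT i hi) hqmem
      set z : EuclideanSpace ℝ (Fin n) := B • u - A • q with hz
      -- z in span of insert j T
      have hzmem : z ∈ Submodule.span ℝ (α '' ↑(insert j T)) := by
        have hKle : K ≤ Submodule.span ℝ (α '' ↑(insert j T)) := by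
          apply Submodule.span_mono
          apply Set.image_mono
          simp [Finset.coe_insert, Set.subset_insert]
        apply Submodule.sub_mem
        · exact Submodule.smul_mem _ _ (hKle hu)
        · apply Submodule.smul_mem
          apply Submodule.sub_mem
          · exact Submodule.subset_span ⟨j, by simp, rfl⟩
          · exact hKle hPmem
      have hzj : ⟪z, α j⟫ = 0 := by
        rw [hz, inner_sub_left, real_inner_smul_left, real_inner_smul_left, hqαj, ← hA]
        ring
      have hzi : ∀ i ∈ T, ⟪z, α i⟫ = B * ⟪u, α i⟫ := fun i hi => by
        rw [hz, inner_sub_left, real_inner_smul_left, real_inner_smul_left, hqαi i hi]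
        ring
      -- norm bound
      have hznorm : B * ‖u‖ ≤ ‖z‖ := by
        have h1 : ‖z‖^2 = B^2 * ‖u‖^2 + A^2 * B := by
          rw [hz, norm_sub_sq_real, real_inner_smul_left, real_inner_smul_right, hqu,
            norm_smul, norm_smul]
          simp only [Real.norm_eq_abs, mul_pow, sq_abs]
          rw [← hB]
          ring
        nlinarith [norm_nonneg z, norm_nonneg u, sq_nonneg A, hBpos, norm_nonneg q,
          mul_nonneg (mul_nonneg hBpos.le (norm_nonneg u)) (norm_nonneg z)]
      have hT' : (insert j T).Nonempty := Finset.insert_nonempty _ _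
      have hcard' : n - (insert j T).card ≤ m := by
        rw [Finset.card_insert_of_notMem hj]
        omega
      have hIH := IH (insert j T) hcard' hT' z hzmem
      have hsup : ((insert j T).sup' hT' fun i => |⟪z, α i⟫|) ≤
          B * T.sup' hT fun i => |⟪u, α i⟫| := by
        apply Finset.sup'_le
        intro i hi
        rcases Finset.mem_insert.mp hi with rfl | hiT
        · rw [hzj, abs_zero]
          apply mul_nonneg hBpos.le
          obtain ⟨i₁, hi₁⟩ := hT
          exact le_trans (abs_nonneg _) (Finset.le_sup' (fun i => |⟪u, α i⟫|) hi₁)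
        · rw [hzi i hiT, abs_mul, abs_of_pos hBpos]
          exact mul_le_mul_of_nonneg_left (Finset.le_sup' (fun i => |⟪u, α i⟫|) hiT) hBpos.le
      have chain : δ * (B * ‖u‖) ≤ B * T.sup' hT fun i => |⟪u, α i⟫| :=
        le_trans (mul_le_mul_of_nonneg_left hznorm hδ0) (le_trans hIH hsup)
      have : δ * ‖u‖ * B ≤ (T.sup' hT fun i => |⟪u, α i⟫|) * B := by
        nlinarith [chain]
      exact le_of_mul_le_mul_right this hBpos

set_option maxHeartbeats 1000000 in
/-- Any billiard trajectory in the polyhedral cone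
`Q = {y : ∀ i, ⟪y, α i⟫ ≥ 0}` determined by linearly independent unit normals
`α 1, …, α n` (a basis of `ℝⁿ`) experiences at most `(4 / (d * δ))^(n-1)` reflections,
where `d > 0` is the inradius constant (the value with `⟪e, α i⟫ = d` for all `i`, for a
unit vector `e`) and `δ = min_{‖y‖=1} max_i |⟪y, α i⟫|` is the capacity constant.
The trajectory is 1-indexed: reflection points `p 1, …, p N`, unit velocities
`v 0, v 1, …, v N` and wall indices `idx 1, …, idx N`. -/
theorem billiard_reflections_le_pow_four_div_d_delta
    (n N : ℕ) [NeZero n] (α : Fin n → EuclideanSpace ℝ (Fin n))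
    (hα : LinearIndependent ℝ α) (hunit : ∀ i, ‖α i‖ = 1)
    (d : ℝ) (hd : 0 < d) (e : EuclideanSpace ℝ (Fin n)) (he : ‖e‖ = 1)
    (hde : ∀ i, ⟪e, α i⟫ = d)
    (δ : ℝ)
    (hδ : IsLeast {x : ℝ | ∃ y : EuclideanSpace ℝ (Fin n), ‖y‖ = 1 ∧
        x = Finset.univ.sup' Finset.univ_nonempty fun i => |⟪y, α i⟫|} δ)
    (p v : ℕ → EuclideanSpace ℝ (Fin n)) (idx : ℕ → Fin n) (t : ℕ → ℝ)
    (hv : ∀ k ≤ N, ‖v k‖ = 1)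
    (hpQ : ∀ k, 1 ≤ k → k ≤ N → ∀ i, 0 ≤ ⟪p k, α i⟫)
    (hwall : ∀ k, 1 ≤ k → k ≤ N → ⟪p k, α (idx k)⟫ = 0)
    (happroach : ∀ k, 1 ≤ k → k ≤ N → ⟪v (k - 1), α (idx k)⟫ < 0)
    (hreflect : ∀ k, 1 ≤ k → k ≤ N →
      v k = v (k - 1) - (2 * ⟪v (k - 1), α (idx k)⟫) • α (idx k))
    (ht : ∀ k, 1 ≤ k → k < N → 0 < t k ∧ p (k + 1) = p k + t k • v k) :
    (N : ℝ) ≤ (4 / (d * δ)) ^ (n - 1) := by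
  classical
  have hn0 : 0 < n := Nat.pos_of_ne_zero (NeZero.ne n)
  set s : ℕ → ℝ := fun k => -⟪v (k-1), α (idx k)⟫ with hsdef
  have hspos : ∀ k, 1 ≤ k → k ≤ N → 0 < s k := fun k h1 h2 => neg_pos.mpr (happroach k h1 h2)
  have hvstep : ∀ k, 1 ≤ k → k ≤ N → v k = v (k-1) + (2 * s k) • α (idx k) := by
    intro k h1 h2
    rw [hreflect k h1 h2]
    have h3 : (2 * s k) = -(2 * ⟪v (k-1), α (idx k)⟫) := by rw [hsdef]; ring
    rw [h3, neg_smul, ← sub_eq_add_neg]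
  have hvsum : ∀ k1 k2, k1 ≤ k2 → k2 ≤ N →
      v k2 = v k1 + ∑ m ∈ Finset.Icc (k1+1) k2, (2 * s m) • α (idx m) := by
    intro k1 k2 h12
    induction k2, h12 using Nat.le_induction with
    | base => intro _; simp
    | succ k2 hk IH =>
      intro h2N
      rw [Finset.sum_Icc_succ_top (by omega : k1 + 1 ≤ k2 + 1), ← add_assoc,
        ← IH (by omega)]
      have h := hvstep (k2+1) (by omega) h2N
      simpa using h
  have hvinner_idx : ∀ k, 1 ≤ k → k ≤ N → ⟪v k, α (idx k)⟫ = s k := by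
    intro k h1 h2
    rw [hvstep k h1 h2, inner_add_left, real_inner_smul_left,
      real_inner_self_eq_norm_sq, hunit]
    have h3 : ⟪v (k-1), α (idx k)⟫ = -s k := by rw [hsdef]; ring
    rw [h3]; ring
  have habs : ∀ i j, |⟪α i, α j⟫| ≤ 1 := by
    intro i j
    have h := abs_real_inner_le_norm (α i) (α j)
    rwa [hunit, hunit, mul_one] at h
  have hidx_ne : ∀ k, 1 ≤ k → k + 1 ≤ N → idx (k+1) ≠ idx k := by
    intro k h1 h2 heq
    have ha := happroach (k+1) (by omega) h2
    simp only [Nat.add_sub_cancel] at ha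
    rw [heq] at ha
    have h3 := hvinner_idx k h1 (by omega)
    have h4 := hspos k h1 (by omega)
    linarith
  have hδlb : ∀ y : EuclideanSpace ℝ (Fin n), ‖y‖ = 1 →
      δ ≤ Finset.univ.sup' Finset.univ_nonempty fun i => |⟪y, α i⟫| :=
    fun y hy => hδ.2 ⟨y, hy, rfl⟩
  have hδpos : 0 < δ := by
    rcases lt_or_ge 0 δ with h | h
    · exact h
    · exfalso
      obtain ⟨y₀, hy₀, hδeq⟩ := hδ.1
      have hall : ∀ i, ⟪y₀, α i⟫ = 0 := by
        intro i
        have h1 : |⟪y₀, α i⟫| ≤ δ :=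
          hδeq ▸ Finset.le_sup' (fun i => |⟪y₀, α i⟫|) (Finset.mem_univ i)
        exact abs_eq_zero.mp (le_antisymm (h1.trans h) (abs_nonneg _))
      have hspan : Submodule.span ℝ (Set.range α) = ⊤ :=
        hα.span_eq_top_of_card_eq_finrank (by simp)
      have hy0span : ∀ w, w ∈ Submodule.span ℝ (Set.range α) → ⟪w, y₀⟫ = 0 := by
        intro w hw
        induction hw using Submodule.span_induction with
        | mem w hw => obtain ⟨i, rfl⟩ := hw; rw [real_inner_comm]; exact hall i
        | zero => simp
        | add w₁ w₂ _ _ h₁ h₂ => rw [inner_add_left, h₁, h₂]; ring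
        | smul c w₁ _ h₁ => rw [real_inner_smul_left, h₁]; ring
      have hyy : ⟪y₀, y₀⟫ = 0 := hy0span y₀ (by rw [hspan]; trivial)
      have : y₀ = 0 := inner_self_eq_zero.mp hyy
      rw [this] at hy₀; simp at hy₀
  have hd1 : d ≤ 1 := by
    have h := real_inner_le_norm e (α ⟨0, hn0⟩)
    rw [hde, he, hunit] at h
    simpa using h
  have hδd : δ ≤ d := by
    apply hδ.2
    refine ⟨e, he, ?_⟩
    have h1 : (fun i : Fin n => |⟪e, α i⟫|) = fun _ : Fin n => d := by
      funext i; rw [hde, abs_of_pos hd]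
    rw [h1, Finset.sup'_const]
  set x : ℝ := 4 / (d * δ) with hxdef
  have hdδpos : 0 < d * δ := mul_pos hd hδpos
  have hx4 : (4:ℝ) ≤ x := by
    rw [hxdef, le_div_iff₀ hdδpos]
    nlinarith
  have hxpos : (0:ℝ) < x := lt_of_lt_of_le (by norm_num) hx4
  set T : ℕ → ℕ → Finset (Fin n) := fun a b => (Finset.Icc a b).image idx with hTdef
  set KK : ℕ → ℕ → Submodule ℝ (EuclideanSpace ℝ (Fin n)) :=
    fun a b => Submodule.span ℝ (α '' ↑(T a b)) with hKKdef
  set P : ℕ → ℕ → EuclideanSpace ℝ (Fin n) → EuclideanSpace ℝ (Fin n) :=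
    fun a b w => ↑(Submodule.orthogonalProjection (KK a b) w) with hPdef
  set ρ : ℕ → ℕ → ℝ := fun a b => ‖P a b (v (a-1))‖ with hρdef
  have hKinner : ∀ a b w u, u ∈ KK a b → ⟪P a b w, u⟫ = ⟪w, u⟫ := by
    intro a b w u hu
    have hsub := Submodule.sub_starProjection_mem_orthogonal (K := KK a b) w
    have h0 : ⟪u, w - P a b w⟫ = 0 :=
      Submodule.inner_right_of_mem_orthogonal hu hsub
    rw [inner_sub_right] at h0
    have e1 := real_inner_comm (P a b w) u
    have e2 := real_inner_comm w u
    linarith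
  have hαmem : ∀ a b i, i ∈ T a b → α i ∈ KK a b := by
    intro a b i hi
    exact Submodule.subset_span ⟨i, by simpa using hi, rfl⟩
  have hdiffmem : ∀ a b k, 1 ≤ a → b ≤ N → a - 1 ≤ k → k ≤ b →
      v k - v (a-1) ∈ KK a b := by
    intro a b k ha hb hk1 hk2
    have hsum := hvsum (a-1) k hk1 (le_trans hk2 hb)
    have ha1 : a - 1 + 1 = a := by omega
    rw [ha1] at hsum
    have : v k - v (a-1) = ∑ m ∈ Finset.Icc a k, (2 * s m) • α (idx m) := by
      rw [hsum]; abel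
    rw [this]
    apply Submodule.sum_mem
    intro m hm
    apply Submodule.smul_mem
    apply hαmem
    rw [hTdef]
    apply Finset.mem_image_of_mem
    rw [Finset.mem_Icc] at hm ⊢
    omega
  have hPv : ∀ a b k, 1 ≤ a → b ≤ N → a - 1 ≤ k → k ≤ b →
      P a b (v k) = P a b (v (a-1)) + (v k - v (a-1)) := by
    intro a b k ha hb hk1 hk2
    have hu := hdiffmem a b k ha hb hk1 hk2
    have h2 : Submodule.orthogonalProjection (KK a b) (v k) =
        Submodule.orthogonalProjection (KK a b) (v (a-1)) + ⟨v k - v (a-1), hu⟩ := by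
      conv_lhs => rw [show v k = v (a-1) + (v k - v (a-1)) by abel]
      rw [map_add]
      congr 1
      exact Submodule.orthogonalProjection_mem_subspace_eq_self (⟨v k - v (a-1), hu⟩ : KK a b)
    simp only [hPdef]
    rw [h2, Submodule.coe_add]
  have hρconst : ∀ a b k, 1 ≤ a → b ≤ N → a - 1 ≤ k → k ≤ b →
      ‖P a b (v k)‖ = ρ a b := by
    intro a b k ha hb hk1 hk2
    have hu := hdiffmem a b k ha hb hk1 hk2
    have h1 := hPv a b k ha hb hk1 hk2
    have hip : ⟪P a b (v (a-1)), v k - v (a-1)⟫ = ⟪v (a-1), v k - v (a-1)⟫ :=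
      hKinner a b (v (a-1)) (v k - v (a-1)) hu
    have hnk : ‖v k‖ = 1 := hv k (le_trans hk2 hb)
    have hna : ‖v (a-1)‖ = 1 := hv (a-1) (by omega)
    have h2 : ‖v k‖^2 = ‖v (a-1)‖^2 + 2 * ⟪v (a-1), v k - v (a-1)⟫ + ‖v k - v (a-1)‖^2 := by
      have := norm_add_sq_real (v (a-1)) (v k - v (a-1))
      rw [show v (a-1) + (v k - v (a-1)) = v k by abel] at this
      linarith
    have h3 : ‖P a b (v k)‖^2 = ρ a b^2 + 2 * ⟪v (a-1), v k - v (a-1)⟫ + ‖v k - v (a-1)‖^2 := by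
      rw [h1, norm_add_sq_real, hip, hρdef]
    have h4 : ‖P a b (v k)‖^2 = ρ a b^2 := by
      rw [hnk, hna] at h2
      nlinarith
    have h5 : 0 ≤ ‖P a b (v k)‖ := norm_nonneg _
    have h6 : (0:ℝ) ≤ ρ a b := norm_nonneg _
    nlinarith
  have hρpos : ∀ a b, 1 ≤ a → a ≤ b → b ≤ N → 0 < ρ a b := by
    intro a b ha hab hb
    have hmem : idx a ∈ T a b := by
      rw [hTdef]
      exact Finset.mem_image_of_mem idx (Finset.mem_Icc.mpr ⟨le_refl a, hab⟩)
    have h1 : ⟪P a b (v (a-1)), α (idx a)⟫ = ⟪v (a-1), α (idx a)⟫ :=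
      hKinner a b (v (a-1)) (α (idx a)) (hαmem a b (idx a) hmem)
    have h2 : ⟪v (a-1), α (idx a)⟫ < 0 := happroach a ha (le_trans hab hb)
    have h3 : P a b (v (a-1)) ≠ 0 := by
      intro h0
      rw [h0, inner_zero_left] at h1
      rw [← h1] at h2
      exact lt_irrefl 0 h2
    rw [hρdef]
    exact norm_pos_iff.mpr h3
  have hmass : ∀ a b, 1 ≤ a → a ≤ b → b ≤ N →
      ∑ k ∈ Finset.Icc a b, s k ≤ ρ a b / d := by
    intro a b ha hab hb
    have hsum := hvsum (a-1) b (by omega) hb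
    have ha1 : a - 1 + 1 = a := by omega
    rw [ha1] at hsum
    have hdiff : v b - v (a-1) = ∑ m ∈ Finset.Icc a b, (2 * s m) • α (idx m) := by
      rw [hsum]; abel
    have hinner : ⟪v b - v (a-1), e⟫ = ∑ m ∈ Finset.Icc a b, 2 * s m * d := by
      rw [hdiff, sum_inner]
      apply Finset.sum_congr rfl
      intro m _
      rw [real_inner_smul_left, real_inner_comm, hde]
    have hPb := hPv a b b ha hb (by omega) le_rfl
    have hρb := hρconst a b b ha hb (by omega) le_rfl
    have h2ρ : ⟪v b - v (a-1), e⟫ ≤ 2 * ρ a b := by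
      have h1 : v b - v (a-1) = P a b (v b) - P a b (v (a-1)) := by
        rw [hPb]; abel
      rw [h1]
      calc ⟪P a b (v b) - P a b (v (a-1)), e⟫
          ≤ ‖P a b (v b) - P a b (v (a-1))‖ * ‖e‖ := real_inner_le_norm _ _
        _ ≤ (‖P a b (v b)‖ + ‖P a b (v (a-1))‖) * ‖e‖ := by
            apply mul_le_mul_of_nonneg_right (norm_sub_le _ _) (norm_nonneg _)
        _ = 2 * ρ a b := by
            rw [he, hρb, hρconst a b (a-1) ha hb le_rfl (by omega)]; ring
    rw [hinner] at h2ρ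
    have h3 : ∑ m ∈ Finset.Icc a b, 2 * s m * d = 2 * d * ∑ m ∈ Finset.Icc a b, s m := by
      rw [Finset.mul_sum]
      apply Finset.sum_congr rfl
      intro m _; ring
    rw [h3] at h2ρ
    rw [le_div_iff₀ hd]
    linarith
  have hcap : ∀ a b k, 1 ≤ a → a ≤ b → b ≤ N → a - 1 ≤ k → k ≤ b →
      ∃ i ∈ T a b, δ * ρ a b ≤ |⟪v k, α i⟫| := by
    intro a b k ha hab hb hk1 hk2
    have hTne : (T a b).Nonempty := by
      refine ⟨idx a, ?_⟩
      rw [hTdef]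
      exact Finset.mem_image_of_mem idx (Finset.mem_Icc.mpr ⟨le_refl a, hab⟩)
    have humem : P a b (v k) ∈ KK a b := by
      rw [hPdef]
      exact (Submodule.orthogonalProjection (KK a b) (v k)).2
    have hce := cap_ext α hα δ hδpos.le hδlb (T a b) hTne (P a b (v k)) humem
    rw [hρconst a b k ha hb hk1 hk2] at hce
    obtain ⟨i₀, hi₀mem, hi₀⟩ := Finset.exists_mem_eq_sup' hTne (fun i => |⟪P a b (v k), α i⟫|)
    rw [hi₀] at hce
    refine ⟨i₀, hi₀mem, ?_⟩
    rwa [hKinner a b (v k) (α i₀) (hαmem a b i₀ hi₀mem)] at hce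
  have hsegmass : ∀ a b a' c, 1 ≤ a → b ≤ N → a ≤ a' → a' ≤ c → c ≤ b →
      T a b ⊆ T a' c → δ * ρ a b / 2 ≤ ∑ k ∈ Finset.Icc a' c, s k := by
    intro a b a' c ha hb haa' hac hcb hTsub
    have hab : a ≤ b := le_trans haa' (le_trans hac hcb)
    obtain ⟨j, hjT, hjcap⟩ := hcap a b (a'-1) ha hab hb (by omega) (by omega)
    -- j is hit somewhere in [a', c]
    have hjT' := hTsub hjT
    rw [hTdef] at hjT'
    obtain ⟨l, hlmem, hlj⟩ := Finset.mem_image.mp hjT'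
    rw [Finset.mem_Icc] at hlmem
    obtain ⟨hal, hlc⟩ := hlmem
    have hl1 : 1 ≤ l := by omega
    have hlN : l ≤ N := by omega
    -- the evolution identity
    have hsum := hvsum (a'-1) (l-1) (by omega) (by omega)
    have ha1 : a' - 1 + 1 = a' := by omega
    rw [ha1] at hsum
    have hevol : ⟪v (l-1), α j⟫ = ⟪v (a'-1), α j⟫ +
        ∑ m ∈ Finset.Icc a' (l-1), 2 * s m * ⟪α (idx m), α j⟫ := by
      rw [hsum, inner_add_left, sum_inner]
      congr 1
      apply Finset.sum_congr rfl
      intro m _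
      rw [real_inner_smul_left]
    have hvl : ⟪v (l-1), α j⟫ = -s l := by
      rw [hsdef, ← hlj]; simp
    set M : ℝ := ∑ m ∈ Finset.Icc a' (l-1), s m with hMdef
    have hMnn : 0 ≤ M := by
      apply Finset.sum_nonneg
      intro m hm
      rw [Finset.mem_Icc] at hm
      exact (hspos m (by omega) (by omega)).le
    have habsS : |∑ m ∈ Finset.Icc a' (l-1), 2 * s m * ⟪α (idx m), α j⟫| ≤ 2 * M := by
      calc |∑ m ∈ Finset.Icc a' (l-1), 2 * s m * ⟪α (idx m), α j⟫|
          ≤ ∑ m ∈ Finset.Icc a' (l-1), |2 * s m * ⟪α (idx m), α j⟫| :=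
            Finset.abs_sum_le_sum_abs _ _
        _ ≤ ∑ m ∈ Finset.Icc a' (l-1), 2 * s m := by
            apply Finset.sum_le_sum
            intro m hm
            rw [Finset.mem_Icc] at hm
            have hsm := (hspos m (by omega) (by omega)).le
            rw [abs_mul, abs_of_nonneg (by linarith : (0:ℝ) ≤ 2 * s m)]
            calc 2 * s m * |⟪α (idx m), α j⟫| ≤ 2 * s m * 1 :=
                  mul_le_mul_of_nonneg_left (habs _ _) (by linarith)
              _ = 2 * s m := by ring
        _ = 2 * M := by rw [hMdef, Finset.mul_sum]
    -- total segment mass ≥ M + s l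
    have hsl := hspos l hl1 hlN
    have htot : M + s l ≤ ∑ k ∈ Finset.Icc a' c, s k := by
      obtain ⟨l', rfl⟩ : ∃ l', l = l' + 1 := ⟨l-1, by omega⟩
      have hstep : ∑ k ∈ Finset.Icc a' (l'+1), s k = (∑ k ∈ Finset.Icc a' l', s k) + s (l'+1) :=
        Finset.sum_Icc_succ_top (by omega) s
      have hsub2 : Finset.Icc a' (l'+1) ⊆ Finset.Icc a' c := Finset.Icc_subset_Icc le_rfl hlc
      have hmono : ∑ k ∈ Finset.Icc a' (l'+1), s k ≤ ∑ k ∈ Finset.Icc a' c, s k := by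
        apply Finset.sum_le_sum_of_subset_of_nonneg hsub2
        intro m hm _
        rw [Finset.mem_Icc] at hm
        exact (hspos m (by omega) (by omega)).le
      have hM' : M = ∑ k ∈ Finset.Icc a' l', s k := by
        rw [hMdef]; congr 1
      rw [hM']
      linarith
    -- case analysis
    have hSeq : ∑ m ∈ Finset.Icc a' (l-1), 2 * s m * ⟪α (idx m), α j⟫ =
        -s l - ⟪v (a'-1), α j⟫ := by
      rw [← hvl, hevol]; ring
    rcases abs_cases (⟪v (a'-1), α j⟫) with ⟨heq, _⟩ | ⟨heq, _⟩
    · -- comp ≥ 0 : δρ ≤ comp, and s l + comp ≤ 2 M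
      rw [heq] at hjcap
      have h1 : -s l - ⟪v (a'-1), α j⟫ ≥ -(2*M) := by
        rw [← hSeq]
        exact neg_le_of_abs_le habsS
      linarith
    · -- comp < 0 : δρ ≤ -comp, and s l ≥ -comp - 2M
      rw [heq] at hjcap
      have h1 : -s l - ⟪v (a'-1), α j⟫ ≤ 2*M := by
        rw [← hSeq]
        exact le_of_abs_le habsS
      by_cases hM2 : δ * ρ a b / 2 ≤ M
      · linarith
      · linarith
  have hpair : ∀ a b k, 1 ≤ a → b ≤ N → (T a b).card ≤ 2 → a ≤ k → k + 1 ≤ b →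
      δ * ρ a b ≤ max (s k) (s (k+1)) := by
    intro a b k ha hb hcard2 hak hk1b
    have hab : a ≤ b := by omega
    obtain ⟨i, hiT, hicap⟩ := hcap a b k ha hab hb (by omega) (by omega)
    have hk1 : 1 ≤ k := by omega
    have hkN : k ≤ N := by omega
    have hk1N : k + 1 ≤ N := by omega
    have hne := hidx_ne k hk1 hk1N
    have hkT : idx k ∈ T a b := by
      rw [hTdef]
      exact Finset.mem_image_of_mem idx (Finset.mem_Icc.mpr ⟨hak, by omega⟩)
    have hk1T : idx (k+1) ∈ T a b := by
      rw [hTdef]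
      exact Finset.mem_image_of_mem idx (Finset.mem_Icc.mpr ⟨by omega, hk1b⟩)
    have hii : i = idx k ∨ i = idx (k+1) := by
      by_contra hcon
      push_neg at hcon
      obtain ⟨hc1, hc2⟩ := hcon
      have hsub : ({i, idx k, idx (k+1)} : Finset (Fin n)) ⊆ T a b := by
        intro z hz
        simp only [Finset.mem_insert, Finset.mem_singleton] at hz
        rcases hz with rfl | rfl | rfl
        · exact hiT
        · exact hkT
        · exact hk1T
      have hcard3 : ({i, idx k, idx (k+1)} : Finset (Fin n)).card = 3 := by
        rw [Finset.card_insert_of_notMem (by simp [hc1, hc2]),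
          Finset.card_insert_of_notMem (by simp [Ne.symm hne]), Finset.card_singleton]
      have := Finset.card_le_card hsub
      omega
    rcases hii with rfl | rfl
    · have h1 := hvinner_idx k hk1 hkN
      rw [h1, abs_of_pos (hspos k hk1 hkN)] at hicap
      exact le_trans hicap (le_max_left _ _)
    · have h1 : ⟪v k, α (idx (k+1))⟫ = -s (k+1) := by
        rw [hsdef]
        simp
      rw [h1, abs_neg, abs_of_pos (hspos (k+1) (by omega) hk1N)] at hicap
      exact le_trans hicap (le_max_right _ _)
  have main : ∀ W : ℕ, ∀ a b : ℕ, 1 ≤ a → b ≤ N → a ≤ b → (T a b).card ≤ W + 1 →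
      ((b + 1 - a : ℕ) : ℝ) ≤ x ^ W := by
    intro W
    induction W with
    | zero =>
      intro a b ha hb hab hcard
      have hba : b = a := by
        by_contra hcon
        have hlt : a + 1 ≤ b := by omega
        have h1 : idx a ∈ T a b := by
          rw [hTdef]
          exact Finset.mem_image_of_mem idx (Finset.mem_Icc.mpr ⟨le_rfl, hab⟩)
        have h2 : idx (a+1) ∈ T a b := by
          rw [hTdef]
          exact Finset.mem_image_of_mem idx (Finset.mem_Icc.mpr ⟨by omega, hlt⟩)
        have hne := hidx_ne a ha (by omega)
        have h3 : 1 < (T a b).card := Finset.one_lt_card.mpr ⟨idx (a+1), h2, idx a, h1, hne⟩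
        omega
      have h4 : (b + 1 - a : ℕ) = 1 := by omega
      rw [h4, pow_zero]
      norm_num
    | succ W IH =>
      intro a b ha hb hab hcard
      have hρ := hρpos a b ha hab hb
      have hδρpos : 0 < δ * ρ a b := mul_pos hδpos hρ
      rcases Nat.eq_zero_or_pos W with rfl | hW
      · -- two-wall case
        have hc2 : (T a b).card ≤ 2 := by omega
        have pairsum : ∀ L b', b' ≤ b → ∀ a', a ≤ a' → b' + 1 - a' = L →
            ((b' + 1 - a' : ℕ) : ℝ) * (δ * ρ a b) ≤
              2 * (∑ k ∈ Finset.Icc a' b', s k) + (δ * ρ a b) := by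
          intro L
          induction L using Nat.strong_induction_on with
          | _ L IHL =>
            intro b' hb' a' ha' hL
            have hsumnn : 0 ≤ ∑ k ∈ Finset.Icc a' b', s k := by
              apply Finset.sum_nonneg
              intro m hm
              rw [Finset.mem_Icc] at hm
              exact (hspos m (by omega) (by omega)).le
            by_cases h0 : b' + 1 - a' ≤ 1
            · have hc : ((b' + 1 - a' : ℕ):ℝ) ≤ 1 := by exact_mod_cast h0
              have hcnn : (0:ℝ) ≤ ((b' + 1 - a' : ℕ):ℝ) := Nat.cast_nonneg _
              nlinarith
            · push_neg at h0
              have h2 : a' + 1 ≤ b' := by omega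
              obtain ⟨b'', rfl⟩ : ∃ m, b' = m + 2 := ⟨b' - 2, by omega⟩
              have hmax := hpair a b (b''+1) ha hb hc2 (by omega) (by omega)
              have hs1 := hspos (b''+1) (by omega) (by omega)
              have hs2 := hspos (b''+2) (by omega) (by omega)
              have hmax' : δ * ρ a b ≤ s (b''+1) + s (b''+2) := by
                rcases max_cases (s (b''+1)) (s (b''+2)) with ⟨hm, _⟩ | ⟨hm, _⟩ <;>
                  rw [hm] at hmax <;> linarith
              have hsplit1 : ∑ k ∈ Finset.Icc a' (b''+2), s k =
                  (∑ k ∈ Finset.Icc a' (b''+1), s k) + s (b''+2) :=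
                Finset.sum_Icc_succ_top (by omega) s
              have hsplit2 : ∑ k ∈ Finset.Icc a' (b''+1), s k =
                  (∑ k ∈ Finset.Icc a' b'', s k) + s (b''+1) :=
                Finset.sum_Icc_succ_top (by omega) s
              have hIHL := IHL (b'' + 1 - a') (by omega) b'' (by omega) a' ha' rfl
              have hlen : (b''+2+1 - a' : ℕ) = (b''+1-a') + 2 := by omega
              rw [hlen]
              push_cast
              push_cast at hIHL
              rw [hsplit1, hsplit2]
              linarith
        have hfin := pairsum (b + 1 - a) b le_rfl a le_rfl rfl
        have hm := hmass a b ha hab hb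
        have h1 : ((b + 1 - a : ℕ):ℝ) * (δ * ρ a b) ≤ 2 * (ρ a b / d) + δ * ρ a b := by
          linarith
        have h2 : 2 * (ρ a b / d) = (x/2) * (δ * ρ a b) := by
          rw [hxdef]
          field_simp
          ring
        have h4 : ((b + 1 - a : ℕ):ℝ) * (δ * ρ a b) ≤ (x/2 + 1) * (δ * ρ a b) := by
          have h5 : (x/2 + 1) * (δ * ρ a b) = (x/2) * (δ * ρ a b) + δ * ρ a b := by ring
          linarith
        have h6 : ((b + 1 - a : ℕ):ℝ) ≤ x/2 + 1 := le_of_mul_le_mul_right h4 hδρpos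
        rw [pow_one]
        linarith
      · -- general step : W ≥ 1
        have hxWpos : (0:ℝ) < x ^ W := pow_pos hxpos W
        have hxW1 : (1:ℝ) ≤ x ^ W := one_le_pow₀ (by linarith)
        have inner : ∀ L a', a ≤ a' → b + 1 - a' = L →
            ((b + 1 - a' : ℕ) : ℝ) * (δ * ρ a b) ≤
              (x^W + 1) * (2 * ∑ k ∈ Finset.Icc a' b, s k) + x^W * (δ * ρ a b) := by
          intro L
          induction L using Nat.strong_induction_on with
          | _ L IHL =>
            intro a' ha' hL
            have hsumnn : 0 ≤ ∑ k ∈ Finset.Icc a' b, s k := by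
              apply Finset.sum_nonneg
              intro m hm
              rw [Finset.mem_Icc] at hm
              exact (hspos m (by omega) (by omega)).le
            by_cases hempty : b < a'
            · have h0 : (b + 1 - a' : ℕ) = 0 := by omega
              rw [h0]
              push_cast
              nlinarith
            · push_neg at hempty
              by_cases hsmall : (T a' b).card ≤ W + 1
              · have h1 := IH a' b (by omega) hb hempty hsmall
                have h2 : ((b + 1 - a' : ℕ):ℝ) * (δ * ρ a b) ≤ x^W * (δ * ρ a b) :=
                  mul_le_mul_of_nonneg_right h1 hδρpos.le
                nlinarith
              · push_neg at hsmall
                have hTsub : T a' b ⊆ T a b := by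
                  rw [hTdef]
                  exact Finset.image_subset_image (Finset.Icc_subset_Icc (by omega) le_rfl)
                have hTeq : T a b ⊆ T a' b := by
                  have heq := Finset.eq_of_subset_of_card_le hTsub (by omega)
                  rw [heq]
                have hex : ∃ c, T a b ⊆ T a' c := ⟨b, hTeq⟩
                have hcP : T a b ⊆ T a' (Nat.find hex) := Nat.find_spec hex
                set c := Nat.find hex with hcdef
                have hcb : c ≤ b := Nat.find_min' hex hTeq
                have hac : a' ≤ c := by
                  by_contra hcon
                  push_neg at hcon
                  have hTne : idx a' ∈ T a b := by
                    rw [hTdef]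
                    exact Finset.mem_image_of_mem idx (Finset.mem_Icc.mpr ⟨by omega, hempty⟩)
                  have hmem := hcP hTne
                  rw [hTdef] at hmem
                  simp only [Finset.Icc_eq_empty_of_lt hcon, Finset.image_empty] at hmem
                  exact absurd hmem (Finset.notMem_empty _)
                have hseg := hsegmass a b a' c ha hb (by omega) hac hcb hcP
                have hpiece : ((c + 1 - a' : ℕ):ℝ) ≤ x^W + 1 := by
                  by_cases hca : c = a'
                  · have h4 : (c + 1 - a' : ℕ) = 1 := by omega
                    rw [h4]
                    push_cast
                    linarith
                  · have hlt : a' < c := by omega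
                    have hnot : ¬ T a b ⊆ T a' (c-1) := Nat.find_min hex (by omega)
                    have hsub2 : T a' (c-1) ⊆ T a b := by
                      rw [hTdef]
                      exact Finset.image_subset_image (Finset.Icc_subset_Icc (by omega) (by omega))
                    have hss : T a' (c-1) ⊂ T a b := by
                      refine Finset.ssubset_iff_subset_ne.mpr ⟨hsub2, ?_⟩
                      intro heq
                      apply hnot
                      rw [heq]
                    have hcard' : (T a' (c-1)).card ≤ W + 1 := by
                      have := Finset.card_lt_card hss
                      omega
                    have h1 := IH a' (c-1) (by omega) (by omega) (by omega) hcard'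
                    have hlen2 : (c - 1 + 1 - a' : ℕ) = c - a' := by omega
                    rw [hlen2] at h1
                    have h5 : (c + 1 - a' : ℕ) = (c - a') + 1 := by omega
                    rw [h5]
                    push_cast
                    linarith
                have hrec := IHL (b + 1 - (c+1)) (by omega) (c+1) (by omega) rfl
                obtain ⟨a'', rfl⟩ : ∃ m, a' = m + 1 := ⟨a' - 1, by omega⟩
                have hsum_split : (∑ k ∈ Finset.Icc (a''+1) c, s k) +
                    (∑ k ∈ Finset.Icc (c+1) b, s k) = ∑ k ∈ Finset.Icc (a''+1) b, s k := by
                  rw [Finset.Icc_add_one_left_eq_Ioc, Finset.Icc_add_one_left_eq_Ioc, Finset.Icc_add_one_left_eq_Ioc]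
                  exact Finset.sum_Ioc_consecutive s (by omega) (by omega)
                have hlensplit : (b + 1 - (a''+1) : ℕ) =
                    (c + 1 - (a''+1)) + (b + 1 - (c+1)) := by omega
                rw [hlensplit]
                push_cast
                have e1 : ((c + 1 - (a''+1) : ℕ):ℝ) * (δ * ρ a b) ≤ (x^W + 1) * (δ * ρ a b) :=
                  mul_le_mul_of_nonneg_right hpiece hδρpos.le
                have e2 : (x^W + 1) * (δ * ρ a b) ≤
                    (x^W + 1) * (2 * ∑ k ∈ Finset.Icc (a''+1) c, s k) := by
                  apply mul_le_mul_of_nonneg_left (by linarith) (by positivity)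
                have e3 : (x^W+1) * (2 * ∑ k ∈ Finset.Icc (a''+1) c, s k) +
                    (x^W+1) * (2 * ∑ k ∈ Finset.Icc (c+1) b, s k) =
                    (x^W+1) * (2 * ∑ k ∈ Finset.Icc (a''+1) b, s k) := by
                  rw [← hsum_split]
                  ring
                have e4 : (((c + 1 - (a''+1) : ℕ):ℝ) + ((b + 1 - (c+1) : ℕ):ℝ)) * (δ * ρ a b)
                    = ((c + 1 - (a''+1) : ℕ):ℝ) * (δ * ρ a b) +
                      ((b + 1 - (c+1) : ℕ):ℝ) * (δ * ρ a b) := by ring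
                have hcast1 : (c - a'' : ℕ) = c + 1 - (a''+1) := by omega
                have hcast2 : (b - c : ℕ) = b + 1 - (c+1) := by omega
                rw [hcast1, hcast2, e4]
                linarith
        have hfin := inner (b + 1 - a) a le_rfl rfl
        have hm := hmass a b ha hab hb
        have hkey : (x^W + 1) * (2 * (ρ a b / d)) = (x^W+1) * (x/2) * (δ * ρ a b) := by
          rw [hxdef]
          field_simp
          ring
        have harith : (x^W + 1) * (x/2) + x^W ≤ x^(W+1) := by
          have h1 : x ≤ x^W := le_self_pow₀ (by linarith) (by omega)
          rw [pow_succ]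
          nlinarith
        have e6 : (x^W+1) * (2 * ∑ k ∈ Finset.Icc a b, s k) ≤ (x^W+1) * (2 * (ρ a b / d)) :=
          mul_le_mul_of_nonneg_left (by linarith) (by positivity)
        have e7 : ((b+1-a:ℕ):ℝ) * (δ * ρ a b) ≤
            ((x^W+1)*(x/2) + x^W) * (δ * ρ a b) := by
          have e8 : ((x^W+1)*(x/2) + x^W) * (δ * ρ a b) =
              (x^W+1)*(x/2)*(δ * ρ a b) + x^W * (δ * ρ a b) := by ring
          linarith
        have e9 := le_of_mul_le_mul_right e7 hδρpos
        linarith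
  rcases Nat.eq_zero_or_pos N with rfl | hN
  · simpa using (pow_pos hxpos (n-1)).le
  · have hcard : (T 1 N).card ≤ (n - 1) + 1 := by
      have h1 := Finset.card_le_univ (T 1 N)
      simp only [Finset.card_univ, Fintype.card_fin] at h1
      omega
    have h := main (n-1) 1 N le_rfl le_rfl hN hcard
    simpa using h
end

section
/- Let v₀, v₁,…,v_N be unit vectors in ℝⁿ such that for each k = 0,…,N−1 there is an index i_k ∈ {1,…,n} with v_{k+1} − v_k = ‖v_{k+1} − v_k‖ α_{i_k}. Then the total length of the zigzag line through v₀,…,v_N satisfies L = Σ_{k=0}^{N−1} ‖v_{k+1} − v_k‖ ≤ 2/d. -/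
/-!
Every step of the zigzag points along some `α i`, and all the `α i` have the same component
`d` along `e`; so the component along `e` of the step from `v k` to `v (k + 1)` is `d` times its
length. Summing, `d * L` is the component along `e` of `v N - v 0`, which is at most
`‖v N‖ + ‖v 0‖ = 2`.
-/

open RealInnerProductSpace

section ZigzagProjection

variable {E : Type*} [NormedAddCommGroup E] [InnerProductSpace ℝ E]

theorem real_inner_eq_mul_norm_of_eq_norm_smul {e a x : E} {d : ℝ} (hea : ⟪e, a⟫ = d)
    (hx : x = ‖x‖ • a) : ⟪e, x⟫ = d * ‖x‖ := by
  conv_lhs => rw [hx]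
  rw [inner_smul_right, hea, mul_comm]

theorem sum_range_real_inner_sub (e : E) (v : ℕ → E) (N : ℕ) :
    ∑ k ∈ Finset.range N, ⟪e, v (k + 1) - v k⟫ = ⟪e, v N - v 0⟫ := by
  rw [← inner_sum, Finset.sum_range_sub]

theorem real_inner_sub_le_of_norm_le_one {e x y : E} (he : ‖e‖ ≤ 1) :
    ⟪e, x - y⟫ ≤ ‖x‖ + ‖y‖ :=
  calc ⟪e, x - y⟫ ≤ ‖e‖ * ‖x - y‖ := real_inner_le_norm _ _
    _ ≤ 1 * (‖x‖ + ‖y‖) := mul_le_mul he (norm_sub_le _ _) (norm_nonneg _) zero_le_one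
    _ = ‖x‖ + ‖y‖ := one_mul _

theorem mul_sum_range_norm_sub_eq_real_inner {e : E} {d : ℝ} {v : ℕ → E} {N : ℕ}
    (hstep : ∀ k < N, ⟪e, v (k + 1) - v k⟫ = d * ‖v (k + 1) - v k‖) :
    d * ∑ k ∈ Finset.range N, ‖v (k + 1) - v k‖ = ⟪e, v N - v 0⟫ := by
  rw [Finset.mul_sum, ← sum_range_real_inner_sub]
  exact Finset.sum_congr rfl fun k hk => (hstep k (Finset.mem_range.mp hk)).symm

end ZigzagProjection

theorem zigzag_length_le_two_div_d_general
    (n N : ℕ) (α : Fin n → EuclideanSpace ℝ (Fin n))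
    (d : ℝ) (hd : 0 < d) (e : EuclideanSpace ℝ (Fin n)) (he : ‖e‖ = 1)
    (hde : ∀ i, ⟪e, α i⟫ = d)
    (v : ℕ → EuclideanSpace ℝ (Fin n)) (hv : ∀ k ≤ N, ‖v k‖ = 1)
    (hzig : ∀ k < N, ∃ i : Fin n, v (k + 1) - v k = ‖v (k + 1) - v k‖ • α i) :
    ∑ k ∈ Finset.range N, ‖v (k + 1) - v k‖ ≤ 2 / d := by
  have hstep : ∀ k < N, ⟪e, v (k + 1) - v k⟫ = d * ‖v (k + 1) - v k‖ := fun k hk => by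
    obtain ⟨i, hi⟩ := hzig k hk
    exact real_inner_eq_mul_norm_of_eq_norm_smul (hde i) hi
  have hproj : ⟪e, v N - v 0⟫ ≤ 2 := by
    have := real_inner_sub_le_of_norm_le_one (x := v N) (y := v 0) he.le
    rwa [hv N le_rfl, hv 0 N.zero_le, one_add_one_eq_two] at this
  rw [le_div_iff₀ hd, mul_comm, mul_sum_range_norm_sub_eq_real_inner hstep]
  exact hproj

/-- If `v 0, …, v N` are unit vectors such that each difference `v (k+1) - v k` is a
nonnegative multiple `‖v (k+1) - v k‖ • α i` of one of the unit vectors `α i`, where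
`⟪e, α i⟫ = d > 0` for a unit vector `e`, then the total length of the zigzag line
through `v 0, …, v N` is at most `2 / d`. -/
theorem zigzag_length_le_two_div_d
    (n N : ℕ) (α : Fin n → EuclideanSpace ℝ (Fin n))
    (hα : LinearIndependent ℝ α) (hunit : ∀ i, ‖α i‖ = 1)
    (d : ℝ) (hd : 0 < d) (e : EuclideanSpace ℝ (Fin n)) (he : ‖e‖ = 1)
    (hde : ∀ i, ⟪e, α i⟫ = d)
    (v : ℕ → EuclideanSpace ℝ (Fin n)) (hv : ∀ k ≤ N, ‖v k‖ = 1)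
    (hzig : ∀ k < N, ∃ i : Fin n, v (k + 1) - v k = ‖v (k + 1) - v k‖ • α i) :
    ∑ k ∈ Finset.range N, ‖v (k + 1) - v k‖ ≤ 2 / d :=
  zigzag_length_le_two_div_d_general n N α d hd e he hde v hv hzig
end

section
/- If d > 0 is the unique positive number for which there is a unit vector e ∈ ℝⁿ with ⟨e, α_i⟩ = d for all i, and δ = min over unit vectors y ∈ ℝⁿ of max_{1≤i≤n} |⟨y, α_i⟩|, then d·δ ≥ λ_min/n; equivalently, 1/(d·δ) ≤ n/λ_min. -/
open RealInnerProductSpace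

lemma quad_ge_aux (n : ℕ) (G : Matrix (Fin n) (Fin n) ℝ) (hH : G.IsHermitian) (lam : ℝ)
    (hlow : ∀ i, lam ≤ hH.eigenvalues i) (x : EuclideanSpace ℝ (Fin n)) :
    lam * ‖x‖ ^ 2 ≤ ⟪x, Matrix.toEuclideanLin G x⟫ := by
  set b := hH.eigenvectorBasis with hb
  set r : Fin n → ℝ := fun i => ⟪b i, x⟫ with hr
  have hc : x = ∑ i, r i • b i := by
    simpa [hr, b.repr_apply_apply] using (b.sum_repr x).symm
  have hTb : ∀ i, Matrix.toEuclideanLin G (b i) = hH.eigenvalues i • b i := by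
    intro i
    apply (WithLp.equiv 2 (Fin n → ℝ)).injective
    simp only [WithLp.equiv_apply, Matrix.ofLp_toEuclideanLin_apply]
    have := hH.mulVec_eigenvectorBasis i
    rw [← hb] at this
    simpa using this
  have hTx : Matrix.toEuclideanLin G x = ∑ i, (r i * hH.eigenvalues i) • b i := by
    conv_lhs => rw [hc]
    rw [map_sum]
    refine Finset.sum_congr rfl fun i _ => ?_
    rw [LinearMap.map_smul, hTb, smul_smul]
  have hxb : ∀ i, ⟪x, b i⟫ = r i := fun i => real_inner_comm x (b i) ▸ rfl
  have hinner : ⟪x, Matrix.toEuclideanLin G x⟫ = ∑ i, hH.eigenvalues i * r i ^ 2 := by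
    rw [hTx, inner_sum]
    refine Finset.sum_congr rfl fun i _ => ?_
    rw [real_inner_smul_right, hxb]; ring
  have hxnorm : ‖x‖ ^ 2 = ∑ i, r i ^ 2 := by
    rw [← real_inner_self_eq_norm_sq]
    nth_rewrite 2 [hc]
    rw [inner_sum]
    refine Finset.sum_congr rfl fun i _ => ?_
    rw [real_inner_smul_right, hxb]; ring
  rw [hinner, hxnorm, Finset.mul_sum]
  exact Finset.sum_le_sum fun i _ => mul_le_mul_of_nonneg_right (hlow i) (sq_nonneg _)

set_option maxHeartbeats 1000000 in
/-- If `d > 0` is the number for which there is a unit vector `e` with `⟪e, α i⟫ = d` for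
all `i`, and `δ = min_{‖y‖=1} max_i |⟪y, α i⟫|`, then `d * δ ≥ λ_min / n`. -/
theorem lambdaMin_div_n_le_d_mul_delta
    (n : ℕ) [NeZero n] (α : Fin n → EuclideanSpace ℝ (Fin n))
    (hα : LinearIndependent ℝ α) (hunit : ∀ i, ‖α i‖ = 1)
    (G : Matrix (Fin n) (Fin n) ℝ) (hG : ∀ i j, G i j = ⟪α i, α j⟫)
    (lam : ℝ)
    (hEig : ∃ ξ : Fin n → ℝ, ξ ≠ 0 ∧ G.mulVec ξ = lam • ξ)
    (hMin : ∀ (μ : ℝ) (ξ : Fin n → ℝ), ξ ≠ 0 → G.mulVec ξ = μ • ξ → lam ≤ μ)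
    (d : ℝ) (hd : 0 < d) (e : EuclideanSpace ℝ (Fin n)) (he : ‖e‖ = 1)
    (hde : ∀ i, ⟪e, α i⟫ = d)
    (δ : ℝ)
    (hδ : IsLeast {x : ℝ | ∃ y : EuclideanSpace ℝ (Fin n), ‖y‖ = 1 ∧
        x = Finset.univ.sup' Finset.univ_nonempty fun i => |⟪y, α i⟫|} δ) :
    lam / n ≤ d * δ := by
  have hn : (0:ℝ) < n := by
    have := Nat.pos_of_ne_zero (NeZero.ne n); exact_mod_cast this
  have hHerm : G.IsHermitian := by
    ext i j
    rw [Matrix.conjTranspose_apply, hG, hG, star_trivial]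
    exact real_inner_comm _ _
  -- key computation
  have key : ∀ (c : Fin n → ℝ) (i : Fin n), ⟪α i, ∑ j, c j • α j⟫ = G.mulVec c i := by
    intro c i
    rw [inner_sum]
    simp only [real_inner_smul_right, Matrix.mulVec, dotProduct]
    exact Finset.sum_congr rfl fun j _ => by simp only [hG]; ring
  have keyself : ∀ (c : Fin n → ℝ),
      ⟪(∑ j, c j • α j : EuclideanSpace ℝ (Fin n)), ∑ j, c j • α j⟫
        = ∑ i, c i * G.mulVec c i := by
    intro c
    rw [sum_inner]
    exact Finset.sum_congr rfl fun i _ => by rw [real_inner_smul_left, key]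
  -- lam > 0
  have hlam : 0 < lam := by
    obtain ⟨ξ, hξ0, hξ⟩ := hEig
    have hz0 : (∑ j, ξ j • α j : EuclideanSpace ℝ (Fin n)) ≠ 0 := by
      intro h
      exact hξ0 (funext fun i => Fintype.linearIndependent_iff.mp hα ξ h i)
    have hzn : 0 < ‖(∑ j, ξ j • α j : EuclideanSpace ℝ (Fin n))‖ := norm_pos_iff.mpr hz0
    have hzpos : (0:ℝ) < ⟪(∑ j, ξ j • α j : EuclideanSpace ℝ (Fin n)), ∑ j, ξ j • α j⟫ := by
      rw [real_inner_self_eq_norm_sq]; positivity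
    rw [keyself, hξ] at hzpos
    have hsum : ∑ i, ξ i * (lam • ξ) i = lam * ∑ i, ξ i ^ 2 := by
      rw [Finset.mul_sum]
      exact Finset.sum_congr rfl fun i _ => by simp [Pi.smul_apply, smul_eq_mul]; ring
    rw [hsum] at hzpos
    have hs : 0 ≤ ∑ i, ξ i ^ 2 := Finset.sum_nonneg fun i _ => sq_nonneg _
    nlinarith
  -- eigenvalue lower bound
  have hlow : ∀ i, lam ≤ hHerm.eigenvalues i := by
    intro i
    refine hMin _ (hHerm.eigenvectorBasis i) ?_ (hHerm.mulVec_eigenvectorBasis i)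
    intro h
    exact hHerm.eigenvectorBasis.orthonormal.ne_zero i (by simpa using h)
  -- δ ≤ d
  have hδd : δ ≤ d := by
    refine hδ.2 ⟨e, he, ?_⟩
    rw [show (fun i => |⟪e, α i⟫|) = fun _ => d by funext i; rw [hde, abs_of_pos hd]]
    rw [Finset.sup'_const]
  -- δ ≥ 0
  obtain ⟨⟨y, hy1, hysup⟩, _⟩ := hδ
  have hδ0 : 0 ≤ δ := by
    have := Finset.le_sup' (fun i => |⟪y, α i⟫|) (Finset.mem_univ (0 : Fin n))
    rw [← hysup] at this
    exact le_trans (abs_nonneg _) this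
  have hvb : ∀ i, |⟪y, α i⟫| ≤ δ := by
    intro i
    have := Finset.le_sup' (fun i => |⟪y, α i⟫|) (Finset.mem_univ i)
    rw [← hysup] at this
    exact this
  -- basis expansion of y
  have hcard : Fintype.card (Fin n) = Module.finrank ℝ (EuclideanSpace ℝ (Fin n)) := by simp
  set B := basisOfLinearIndependentOfCardEqFinrank hα hcard with hB
  set c : Fin n → ℝ := fun i => B.repr y i with hc
  have hyc : ∑ j, c j • α j = y := by
    conv_rhs => rw [← B.sum_repr y]
    exact Finset.sum_congr rfl fun j _ => by
      rw [hc, coe_basisOfLinearIndependentOfCardEqFinrank]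
  set v : Fin n → ℝ := G.mulVec c with hv
  have hvy : ∀ i, v i = ⟪y, α i⟫ := by
    intro i
    rw [hv, ← key c i, hyc, real_inner_comm]
  -- the euclidean vectors
  set x : EuclideanSpace ℝ (Fin n) := (WithLp.equiv 2 (Fin n → ℝ)).symm c with hx
  set w : EuclideanSpace ℝ (Fin n) := (WithLp.equiv 2 (Fin n → ℝ)).symm v with hw
  have hxw : ⟪x, w⟫ = ∑ i, c i * v i := by
    rw [hx, hw, WithLp.equiv_symm_apply, EuclideanSpace.inner_toLp_toLp]
    simp [dotProduct, mul_comm]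
  have hone : (1:ℝ) = ∑ i, c i * v i := by
    have h1 : ⟪y, y⟫ = (1:ℝ) := by
      rw [real_inner_self_eq_norm_sq, hy1]; norm_num
    rw [← h1]
    conv_lhs => rw [← hyc]
    rw [keyself]
  -- quadratic form bound: lam * ‖x‖² ≤ 1
  have hTx : Matrix.toEuclideanLin G x = w := by
    rw [hx, hw, WithLp.equiv_symm_apply, Matrix.toEuclideanLin_apply_piLp_toLp]
  have hquad : lam * ‖x‖ ^ 2 ≤ 1 := by
    have := quad_ge_aux n G hHerm lam hlow x
    rw [hTx, hxw, ← hone] at this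
    exact this
  -- norm of w
  have hwnorm : ‖w‖ ^ 2 ≤ n * δ ^ 2 := by
    rw [← real_inner_self_eq_norm_sq]
    have : ⟪w, w⟫ = ∑ i, v i * v i := by
      rw [hw, WithLp.equiv_symm_apply, EuclideanSpace.inner_toLp_toLp]
      simp [dotProduct]
    rw [this]
    calc ∑ i, v i * v i ≤ ∑ _i : Fin n, δ ^ 2 := by
          refine Finset.sum_le_sum fun i _ => ?_
          have := hvb i
          rw [← hvy i] at this
          nlinarith [abs_nonneg (v i), sq_abs (v i), this]
      _ = n * δ ^ 2 := by simp [Finset.sum_const, nsmul_eq_mul]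
  -- Cauchy–Schwarz
  have hcs : (1:ℝ) ≤ ‖x‖ * ‖w‖ := by
    calc (1:ℝ) = ⟪x, w⟫ := by rw [hxw, hone]
      _ ≤ ‖x‖ * ‖w‖ := real_inner_le_norm x w
  have hx0 : 0 ≤ ‖x‖ := norm_nonneg _
  have hw0 : 0 ≤ ‖w‖ := norm_nonneg _
  -- combine: lam ≤ lam * ‖x‖² * ‖w‖² ≤ n δ²
  have h2 : (1:ℝ) ≤ ‖x‖ ^ 2 * ‖w‖ ^ 2 := by nlinarith
  have h3 : lam ≤ n * δ ^ 2 := by nlinarith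
  have h4 : lam / n ≤ δ ^ 2 := by
    rw [div_le_iff₀ hn]; linarith [h3]
  nlinarith
end

section
/- Let v₀, v₁,…,v_M be unit vectors in ℝⁿ such that for each k = 0,…,M−1 there is an index i_k ∈ {1,…,n} with v_{k+1} − v_k = ‖v_{k+1} − v_k‖ α_{i_k}. Suppose that for every i ∈ {1,…,n} the points v₀,…,v_M do not all lie strictly on one side of the hyperplane H_i, i.e., for each i there exists k_i ∈ {0,…,M} with ⟨v₀, α_i⟩ · ⟨v_{k_i}, α_i⟩ ≤ 0. Then Σ_{k=0}^{M−1} ‖v_{k+1} − v_k‖ ≥ max_{1≤i≤n} |⟨v₀, α_i⟩| ≥ δ, where δ = min over unit vectors y ∈ ℝⁿ of max_{1≤i≤n} |⟨y, α_i⟩|. -/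
open RealInnerProductSpace

/- If `⟪v 0, α i⟫` and `⟪v k, α i⟫` have opposite signs, then
`|⟪v 0, α i⟫| ≤ |⟪v k - v 0, α i⟫| ≤ ‖v k - v 0‖`, and by the triangle inequality this is at most
the length of the path. -/

lemma abs_le_abs_sub_of_mul_nonpos {a b : ℝ} (h : a * b ≤ 0) : |a| ≤ |b - a| :=
  sq_le_sq.1 (by nlinarith [sq_nonneg b])

lemma norm_sub_le_sum_range_norm_sub {E : Type*} [SeminormedAddCommGroup E] (v : ℕ → E)
    (k : ℕ) : ‖v k - v 0‖ ≤ ∑ j ∈ Finset.range k, ‖v (j + 1) - v j‖ := by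
  simpa only [dist_eq_norm'] using dist_le_range_sum_dist v k

lemma abs_inner_le_sum_range_norm_sub_of_mul_inner_nonpos {E : Type*}
    [NormedAddCommGroup E] [InnerProductSpace ℝ E] {a : E} (ha : ‖a‖ = 1) (v : ℕ → E)
    {k M : ℕ} (hkM : k ≤ M) (hk : ⟪v 0, a⟫ * ⟪v k, a⟫ ≤ 0) :
    |⟪v 0, a⟫| ≤ ∑ j ∈ Finset.range M, ‖v (j + 1) - v j‖ :=
  calc |⟪v 0, a⟫| ≤ |⟪v k - v 0, a⟫| := by
        rw [inner_sub_left]; exact abs_le_abs_sub_of_mul_nonpos hk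
    _ ≤ ‖v k - v 0‖ := by simpa only [ha, mul_one] using abs_real_inner_le_norm (v k - v 0) a
    _ ≤ ∑ j ∈ Finset.range k, ‖v (j + 1) - v j‖ := norm_sub_le_sum_range_norm_sub v k
    _ ≤ ∑ j ∈ Finset.range M, ‖v (j + 1) - v j‖ :=
        Finset.sum_le_sum_of_subset_of_nonneg (Finset.range_subset_range.2 hkM)
          fun _ _ _ => norm_nonneg _

theorem zigzag_length_ge_delta_general
    (n M : ℕ) [NeZero n] (α : Fin n → EuclideanSpace ℝ (Fin n))
    (hunit : ∀ i, ‖α i‖ = 1)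
    (v : ℕ → EuclideanSpace ℝ (Fin n)) (hv : ∀ k ≤ M, ‖v k‖ = 1)
    (hsides : ∀ i : Fin n, ∃ k ≤ M, ⟪v 0, α i⟫ * ⟪v k, α i⟫ ≤ 0)
    (δ : ℝ)
    (hδ : IsLeast {x : ℝ | ∃ y : EuclideanSpace ℝ (Fin n), ‖y‖ = 1 ∧
        x = Finset.univ.sup' Finset.univ_nonempty fun i => |⟪y, α i⟫|} δ) :
    (Finset.univ.sup' Finset.univ_nonempty fun i => |⟪v 0, α i⟫|) ≤
        ∑ k ∈ Finset.range M, ‖v (k + 1) - v k‖ ∧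
      δ ≤ Finset.univ.sup' Finset.univ_nonempty fun i => |⟪v 0, α i⟫| := by
  refine ⟨Finset.sup'_le _ _ fun i _ => ?_, hδ.2 ⟨v 0, hv 0 M.zero_le, rfl⟩⟩
  obtain ⟨k, hkM, hk⟩ := hsides i
  exact abs_inner_le_sum_range_norm_sub_of_mul_inner_nonpos (hunit i) v hkM hk

/-- If `v 0, …, v M` are unit vectors forming a zigzag line (each difference being a
nonnegative multiple of some `α i`), and for each `i` the points do not all lie strictly
on one side of the hyperplane `H i`, then the length of the zigzag line is at least
`max_i |⟪v 0, α i⟫|`, which is at least `δ = min_{‖y‖=1} max_i |⟪y, α i⟫|`. -/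
theorem zigzag_length_ge_delta
    (n M : ℕ) [NeZero n] (α : Fin n → EuclideanSpace ℝ (Fin n))
    (hα : LinearIndependent ℝ α) (hunit : ∀ i, ‖α i‖ = 1)
    (v : ℕ → EuclideanSpace ℝ (Fin n)) (hv : ∀ k ≤ M, ‖v k‖ = 1)
    (hzig : ∀ k < M, ∃ i : Fin n, v (k + 1) - v k = ‖v (k + 1) - v k‖ • α i)
    (hsides : ∀ i : Fin n, ∃ k ≤ M, ⟪v 0, α i⟫ * ⟪v k, α i⟫ ≤ 0)
    (δ : ℝ)
    (hδ : IsLeast {x : ℝ | ∃ y : EuclideanSpace ℝ (Fin n), ‖y‖ = 1 ∧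
        x = Finset.univ.sup' Finset.univ_nonempty fun i => |⟪y, α i⟫|} δ) :
    (Finset.univ.sup' Finset.univ_nonempty fun i => |⟪v 0, α i⟫|) ≤
        ∑ k ∈ Finset.range M, ‖v (k + 1) - v k‖ ∧
      δ ≤ Finset.univ.sup' Finset.univ_nonempty fun i => |⟪v 0, α i⟫| :=
  zigzag_length_ge_delta_general n M α hunit v hv hsides δ hδ
end

section
/- Any billiard trajectory in a planar wedge Q makes at most ⌈π/θ⌉ reflections, where θ = arccos(−⟨α₁, α₂⟩) is the angle of the wedge; that is, if p₁,…,p_N, v₀,…,v_N, i₁,…,i_N form a billiard trajectory in Q with N reflections, then N ≤ ⌈π/θ⌉ (equivalently, N < π/θ + 1). -/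
open RealInnerProductSpace

open Real

set_option maxHeartbeats 1000000 in
lemma wedge_trig_aux (θ : ℝ) (hθ0 : 0 < θ) (hθπ : θ < π) (N : ℕ) (c : ℕ → ℝ)
    (hneg : ∀ k, 1 ≤ k → k ≤ N → c k < 0)
    (hrec : ∀ k, 2 ≤ k → k + 1 ≤ N → c (k + 1) = 2 * Real.cos θ * c k - c (k - 1)) :
    ((N : ℝ) - 1) * θ < π := by
  rcases Nat.lt_or_ge N 2 with hN | hN
  · interval_cases N <;> simp <;> nlinarith [Real.pi_pos]
  have hπ := Real.pi_pos
  have hsin : 0 < Real.sin θ := Real.sin_pos_of_pos_of_lt_pi hθ0 hθπ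
  set A := c 1 with hA
  set B := (c 2 - A * Real.cos θ) / Real.sin θ with hB
  have hA0 : A < 0 := hneg 1 le_rfl (by omega)
  set R := Real.sqrt (A ^ 2 + B ^ 2) with hR
  have hRsq : R ^ 2 = A ^ 2 + B ^ 2 := Real.sq_sqrt (by positivity)
  have hR0 : 0 < R := Real.sqrt_pos.2 (by nlinarith)
  have hAR : A / R < 0 := div_neg_of_neg_of_pos hA0 hR0
  have hRA : 0 < R - A := by linarith
  have hAR1 : -1 ≤ A / R := by
    rw [le_div_iff₀ hR0]
    nlinarith [sq_nonneg B]
  have hB' : B * Real.sin θ = c 2 - A * Real.cos θ := by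
    rw [hB]; field_simp
  have hcarc : Real.cos (Real.arccos (A / R)) = A / R := Real.cos_arccos hAR1 (by linarith)
  have harc : π / 2 < Real.arccos (A / R) := by
    by_contra hcon; push_neg at hcon
    have h0 : (0 : ℝ) ≤ Real.arccos (A / R) := Real.arccos_nonneg _
    have := Real.cos_nonneg_of_mem_Icc ⟨by linarith, hcon⟩
    rw [hcarc] at this; linarith
  have harc2 : Real.arccos (A / R) ≤ π := Real.arccos_le_pi _
  have hsq : (1 : ℝ) - (A / R) ^ 2 = (B / R) ^ 2 := by
    field_simp
    nlinarith [hRsq]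
  have hψex : ∃ ψ : ℝ, Real.cos ψ = A / R ∧ Real.sin ψ = -B / R ∧
      π / 2 < ψ ∧ ψ < 3 * π / 2 := by
    by_cases h : 0 ≤ -B
    · refine ⟨Real.arccos (A / R), hcarc, ?_, harc, by linarith⟩
      rw [Real.sin_arccos, show (1 : ℝ) - (A / R) ^ 2 = (-B / R) ^ 2 by rw [hsq]; ring]
      exact Real.sqrt_sq (by positivity)
    · push_neg at h
      refine ⟨2 * π - Real.arccos (A / R), ?_, ?_, by linarith, by linarith⟩
      · rw [show 2 * π - Real.arccos (A / R) = -(Real.arccos (A / R)) + 2 * π by ring,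
          Real.cos_add_two_pi, Real.cos_neg]
        exact hcarc
      · rw [show 2 * π - Real.arccos (A / R) = -(Real.arccos (A / R)) + 2 * π by ring,
          Real.sin_add_two_pi, Real.sin_neg, Real.sin_arccos, hsq]
        rw [Real.sqrt_sq (div_nonneg (by linarith) hR0.le)]
        ring
  obtain ⟨ψ, hcosψ, hsinψ, hψlo, hψhi⟩ := hψex
  have trig : ∀ x : ℝ, Real.cos (x + θ) = 2 * Real.cos θ * Real.cos x - Real.cos (x - θ) := by
    intro x; rw [Real.cos_add, Real.cos_sub]; ring
  have hcf : ∀ k, k + 2 ≤ N →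
      c (k + 1) = R * Real.cos (ψ + k * θ) ∧ c (k + 2) = R * Real.cos (ψ + (k + 1) * θ) := by
    intro k
    induction k with
    | zero =>
      intro _
      constructor
      · norm_num [hcosψ]
        field_simp
        exact hA.symm
      · have hc2 : c 2 = R * Real.cos (ψ + θ) := by
          rw [Real.cos_add, hcosψ, hsinψ]
          have hexp : R * (A / R * Real.cos θ - -B / R * Real.sin θ)
              = A * Real.cos θ + B * Real.sin θ := by field_simp; ring
          rw [hexp]
          linarith [hB']
        show c 2 = _
        rw [hc2]; norm_num
    | succ n ih =>
      intro h
      have h1 := (ih (by omega)).1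
      have h2 := (ih (by omega)).2
      have h3 := hrec (n + 2) (by omega) (by omega)
      norm_num at h3
      refine ⟨?_, ?_⟩
      · show c (n + 2) = _
        rw [h2]; push_cast; ring_nf
      · show c (n + 3) = _
        rw [h3, h1, h2]
        push_cast
        rw [show ψ + ((n : ℝ) + 1 + 1) * θ = (ψ + ((n : ℝ) + 1) * θ) + θ from by ring, trig,
          show (ψ + ((n : ℝ) + 1) * θ) - θ = ψ + (n : ℝ) * θ from by ring]
        ring
  have key : ∀ k, k + 1 ≤ N → c (k + 1) = R * Real.cos (ψ + k * θ) := by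
    intro k hk
    rcases Nat.lt_or_ge (k + 2) (N + 1) with h | h
    · exact (hcf k (by omega)).1
    · cases k with
      | zero => exact (hcf 0 (by omega)).1
      | succ n =>
        have h2 := (hcf n (by omega)).2
        show c (n + 2) = _
        rw [h2]; push_cast; ring_nf
  have mem : ∀ k, k + 1 ≤ N → π / 2 < ψ + k * θ ∧ ψ + k * θ < 3 * π / 2 := by
    intro k
    induction k with
    | zero =>
      intro _
      rw [show ψ + ((0 : ℕ) : ℝ) * θ = ψ by norm_num]
      exact ⟨hψlo, hψhi⟩
    | succ n ih =>
      intro h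
      obtain ⟨l, u⟩ := ih (by omega)
      have hcneg : c (n + 2) < 0 := hneg (n + 2) (by omega) (by omega)
      have hck := key (n + 1) (by omega)
      rw [show n + 1 + 1 = n + 2 from rfl] at hck
      push_cast at hck
      have hcos : Real.cos (ψ + ((n : ℝ) + 1) * θ) < 0 := by nlinarith
      constructor
      · push_cast; linarith
      · push_cast
        by_contra hge; push_neg at hge
        have hx : ψ + ((n : ℝ) + 1) * θ - 2 * π ∈ Set.Icc (-(π / 2)) (π / 2) :=
          ⟨by linarith, by linarith⟩
        have h0 := Real.cos_nonneg_of_mem_Icc hx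
        rw [Real.cos_sub_two_pi] at h0
        linarith
  obtain ⟨_, u⟩ := mem (N - 1) (by omega)
  have hcast : ((N - 1 : ℕ) : ℝ) = (N : ℝ) - 1 := by
    rw [Nat.cast_sub (by omega)]; norm_num
  rw [hcast] at u
  linarith

set_option maxHeartbeats 1000000 in
/-- Any billiard trajectory in a planar wedge
`Q = {y : ⟪y, α 0⟫ ≥ 0 ∧ ⟪y, α 1⟫ ≥ 0}` with angle `θ = arccos(-⟪α 0, α 1⟫)` makes at
most `⌈π / θ⌉` reflections.
The trajectory is 1-indexed: reflection points `p 1, …, p N`, unit velocities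
`v 0, v 1, …, v N` and wall indices `idx 1, …, idx N`. -/
theorem wedge_billiard_reflections_le_ceil_pi_div_angle
    (N : ℕ) (α : Fin 2 → EuclideanSpace ℝ (Fin 2))
    (hα : LinearIndependent ℝ α) (hunit : ∀ i, ‖α i‖ = 1)
    (θ : ℝ) (hθ : θ = Real.arccos (-⟪α 0, α 1⟫))
    (p v : ℕ → EuclideanSpace ℝ (Fin 2)) (idx : ℕ → Fin 2) (t : ℕ → ℝ)
    (hv : ∀ k ≤ N, ‖v k‖ = 1)
    (hpQ : ∀ k, 1 ≤ k → k ≤ N → ∀ i, 0 ≤ ⟪p k, α i⟫)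
    (hwall : ∀ k, 1 ≤ k → k ≤ N → ⟪p k, α (idx k)⟫ = 0)
    (happroach : ∀ k, 1 ≤ k → k ≤ N → ⟪v (k - 1), α (idx k)⟫ < 0)
    (hreflect : ∀ k, 1 ≤ k → k ≤ N →
      v k = v (k - 1) - (2 * ⟪v (k - 1), α (idx k)⟫) • α (idx k))
    (ht : ∀ k, 1 ≤ k → k < N → 0 < t k ∧ p (k + 1) = p k + t k • v k) :
    (N : ℤ) ≤ ⌈Real.pi / θ⌉ := by
  -- strict Cauchy–Schwarz from linear independence
  have hne : ∀ i, α i ≠ 0 := by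
    intro i h
    exact hα.ne_zero i h
  have hdep : ∀ r : ℝ, r ≠ 0 → α 1 ≠ r • α 0 := by
    intro r hr0 h
    have h2 := (linearIndependent_fin2.mp hα).2 r⁻¹
    apply h2
    rw [h, smul_smul, inv_mul_cancel₀ hr0, one_smul]
  have habs : |⟪α 0, α 1⟫| < 1 := by
    have hle : |⟪α 0, α 1⟫| ≤ 1 := by
      have h := abs_real_inner_le_norm (α 0) (α 1)
      rw [hunit 0, hunit 1] at h
      linarith
    rcases lt_or_eq_of_le hle with h | h
    · exact h
    · exfalso
      have h1 : ‖⟪α 0, α 1⟫‖ = ‖α 0‖ * ‖α 1‖ := by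
        rw [hunit 0, hunit 1, Real.norm_eq_abs, h]; norm_num
      obtain ⟨r, hr0, hr⟩ := (norm_inner_eq_norm_iff (𝕜 := ℝ) (hne 0) (hne 1)).mp h1
      exact hdep r hr0 hr
  have hθ0 : 0 < θ := by
    rw [hθ]
    apply Real.arccos_pos.2
    cases abs_lt.mp habs with
    | intro h1 h2 => linarith
  have hθπ : θ < Real.pi := by
    rw [hθ]
    rcases lt_or_eq_of_le (Real.arccos_le_pi (-⟪α 0, α 1⟫)) with h | h
    · exact h
    · exfalso
      obtain ⟨h1, h2⟩ := abs_lt.mp habs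
      have hc := Real.cos_arccos (x := -⟪α 0, α 1⟫) (by linarith) (by linarith)
      rw [h, Real.cos_pi] at hc
      linarith
  have hcos : Real.cos θ = -⟪α 0, α 1⟫ := by
    rw [hθ]
    apply Real.cos_arccos
    · cases abs_lt.mp habs with
      | intro h1 h2 => linarith
    · cases abs_lt.mp habs with
      | intro h1 h2 => linarith
  have hself : ∀ i, ⟪α i, α i⟫ = 1 := by
    intro i
    rw [real_inner_self_eq_norm_sq, hunit i]; norm_num
  have hpair : ∀ i j : Fin 2, i ≠ j → ⟪α i, α j⟫ = ⟪α 0, α 1⟫ := by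
    intro i j hij
    fin_cases i <;> fin_cases j <;> first
      | rfl
      | exact absurd rfl hij
      | exact real_inner_comm _ _
  have fin2 : ∀ a b c : Fin 2, a ≠ b → c ≠ b → a = c := by decide
  -- flip identity
  have hflip : ∀ k, 1 ≤ k → k ≤ N → ⟪v k, α (idx k)⟫ = -⟪v (k - 1), α (idx k)⟫ := by
    intro k h1 h2
    rw [hreflect k h1 h2, inner_sub_left, real_inner_smul_left, hself]
    ring
  -- walls alternate
  have halt : ∀ k, 1 ≤ k → k < N → idx (k + 1) ≠ idx k := by
    intro k h1 h2 he
    obtain ⟨ht0, hp⟩ := ht k h1 h2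
    have h3 : ⟪p (k + 1), α (idx k)⟫ = t k * ⟪v k, α (idx k)⟫ := by
      rw [hp, inner_add_left, real_inner_smul_left, hwall k h1 (by omega)]
      ring
    have h4 : 0 < ⟪p (k + 1), α (idx k)⟫ := by
      rw [h3, hflip k h1 (by omega)]
      have h5 := happroach k h1 (by omega)
      nlinarith
    have h5 := hwall (k + 1) (by omega) (by omega)
    rw [he] at h5
    linarith
  set c : ℕ → ℝ := fun k => ⟪v (k - 1), α (idx k)⟫ with hcdef
  have hcneg : ∀ k, 1 ≤ k → k ≤ N → c k < 0 := fun k h1 h2 => happroach k h1 h2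
  have hcrec : ∀ k, 2 ≤ k → k + 1 ≤ N → c (k + 1) = 2 * Real.cos θ * c k - c (k - 1) := by
    intro k h2 hkN
    have e1 : idx (k + 1) ≠ idx k := halt k (by omega) (by omega)
    have e2 : idx k ≠ idx (k - 1) := by
      have h := halt (k - 1) (by omega) (by omega)
      rwa [show k - 1 + 1 = k from by omega] at h
    have e3 : idx (k + 1) = idx (k - 1) := fin2 _ _ _ e1 e2.symm
    have hck1 : c (k + 1) = ⟪v k, α (idx (k + 1))⟫ := by
      simp only [hcdef, Nat.add_sub_cancel]
    rw [hck1, hreflect k (by omega) (by omega), inner_sub_left, real_inner_smul_left]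
    have hprod : ⟪α (idx k), α (idx (k + 1))⟫ = ⟪α 0, α 1⟫ := hpair _ _ e1.symm
    have hfirst : ⟪v (k - 1), α (idx (k + 1))⟫ = -c (k - 1) := by
      rw [e3]
      exact hflip (k - 1) (by omega) (by omega)
    rw [hfirst, hprod]
    have : ⟪v (k - 1), α (idx k)⟫ = c k := rfl
    rw [this, hcos]
    ring
  have hmain : ((N : ℝ) - 1) * θ < Real.pi := wedge_trig_aux θ hθ0 hθπ N c hcneg hcrec
  have hlt : (((N : ℤ) - 1 : ℤ) : ℝ) < Real.pi / θ := by
    rw [lt_div_iff₀ hθ0]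
    push_cast
    linarith
  have hfin := Int.lt_ceil.mpr hlt
  omega
end
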